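/- arXiv:0811.1820 — 3 statements merged into one kernel-verified Lean document; each statement's English description precedes it below -/
import Mathlib

section
/- Let X be a set, d a pseudometric on X, and (d_j) a sequence of pseudometrics on X such that sup_{x,y∈X} |d_j(x,y) − d(x,y)| → 0 as j → ∞. Suppose there are constants B ≥ b > 0 and δ₀ > 0 such that for every j and every δ ∈ (0, δ₀): (i) every δ-separated subset of X for d_j has cardinality at most B·δ^{-2}, and (ii) every maximal δ-separated subset of X for d_j has cardinality at least b·δ^{-2}. Then for every δ ∈ (0, δ₀/3), every maximal δ-separated subset S of X for d satisfies (b/9)·δ^{-2} ≤ |S| ≤ 4B·δ^{-2}. -/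
/-- A pseudometric on a set `X`. -/
def IsPseudometric {X : Type*} (d : X → X → ℝ) : Prop :=
  (∀ x, d x x = 0) ∧ (∀ x y, d x y = d y x) ∧ (∀ x y, 0 ≤ d x y) ∧
  (∀ x y z, d x z ≤ d x y + d y z)

/-- `S` is `δ`-separated for the pseudometric `d`. -/
def IsSeparatedSet {X : Type*} (d : X → X → ℝ) (δ : ℝ) (S : Set X) : Prop :=
  ∀ p ∈ S, ∀ q ∈ S, p ≠ q → δ ≤ d p q

/-- `S` is a maximal `δ`-separated subset of `X` for the pseudometric `d`. -/
def IsMaximalSeparatedSet {X : Type*} (d : X → X → ℝ) (δ : ℝ) (S : Set X) : Prop :=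
  IsSeparatedSet d δ S ∧ ∀ T : Set X, S ⊆ T → IsSeparatedSet d δ T → T = S

theorem net_cardinality_for_limit_pseudometric {X : Type*}
    (d : X → X → ℝ) (dj : ℕ → X → X → ℝ)
    (hd : IsPseudometric d) (hdj : ∀ j, IsPseudometric (dj j))
    (hconv : TendstoUniformly (fun j (p : X × X) => dj j p.1 p.2)
      (fun p : X × X => d p.1 p.2) Filter.atTop)
    (b B δ₀ : ℝ) (hb : 0 < b) (hbB : b ≤ B) (hδ₀ : 0 < δ₀)
    (hupper : ∀ j : ℕ, ∀ δ : ℝ, 0 < δ → δ < δ₀ → ∀ S : Set X,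
      IsSeparatedSet (dj j) δ S → S.Finite ∧ (S.ncard : ℝ) ≤ B / δ ^ 2)
    (hlower : ∀ j : ℕ, ∀ δ : ℝ, 0 < δ → δ < δ₀ → ∀ S : Set X,
      IsMaximalSeparatedSet (dj j) δ S → b / δ ^ 2 ≤ (S.ncard : ℝ)) :
    ∀ δ : ℝ, 0 < δ → δ < δ₀ / 3 → ∀ S : Set X, IsMaximalSeparatedSet d δ S →
      S.Finite ∧ (b / 9) / δ ^ 2 ≤ (S.ncard : ℝ) ∧ (S.ncard : ℝ) ≤ 4 * B / δ ^ 2 := by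
  intro δ hδ hδ3 S hS
  obtain ⟨hSsep, hSmax⟩ := hS
  obtain ⟨hd0, hdsymm, hdnn, hdtri⟩ := hd
  -- net property of S
  have hnet : ∀ x : X, ∃ p ∈ S, d x p < δ := by
    intro x
    by_cases hx : x ∈ S
    · exact ⟨x, hx, by rw [hd0]; exact hδ⟩
    · by_contra h
      push_neg at h
      have hsep : IsSeparatedSet d δ (insert x S) := by
        intro p hp q hq hpq
        rcases hp with rfl | hp
        · rcases hq with rfl | hq
          · exact absurd rfl hpq
          · exact h q hq
        · rcases hq with rfl | hq
          · rw [hdsymm]; exact h p hp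
          · exact hSsep p hp q hq hpq
      have := hSmax (insert x S) (Set.subset_insert x S) hsep
      exact hx (this ▸ Set.mem_insert x S)
  -- pick j with uniform approximation δ/4
  rw [Metric.tendstoUniformly_iff] at hconv
  obtain ⟨j, hj⟩ := (hconv (δ/4) (by linarith)).exists
  have hjd : ∀ x y : X, |d x y - dj j x y| < δ/4 := by
    intro x y
    have := hj (x, y)
    rwa [Real.dist_eq] at this
  obtain ⟨hj0, hjsymm, hjnn, hjtri⟩ := hdj j
  -- upper bound: S is δ/2-separated for dj j
  have hSsep' : IsSeparatedSet (dj j) (δ/2) S := by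
    intro p hp q hq hpq
    have h1 := hSsep p hp q hq hpq
    have h2 := abs_lt.mp (hjd p q)
    linarith [h2.1]
  obtain ⟨hfin, hcard⟩ := hupper j (δ/2) (by linarith) (by linarith) S hSsep'
  refine ⟨hfin, ?_, ?_⟩
  · -- lower bound: maximal 3δ-separated set for dj j
    obtain ⟨T, hTsep, hTmax⟩ : ∃ T, IsSeparatedSet (dj j) (3*δ) T ∧
        ∀ U, IsSeparatedSet (dj j) (3*δ) U → T ⊆ U → U = T := by
      have hz : ∀ c ⊆ {T : Set X | IsSeparatedSet (dj j) (3*δ) T},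
          IsChain (· ⊆ ·) c → ∃ ub ∈ {T : Set X | IsSeparatedSet (dj j) (3*δ) T},
            ∀ s ∈ c, s ⊆ ub := by
        intro c hc hchain
        refine ⟨⋃₀ c, ?_, fun s hs => Set.subset_sUnion_of_mem hs⟩
        intro p hp q hq hpq
        obtain ⟨s, hs, hps⟩ := hp
        obtain ⟨t, ht, hqt⟩ := hq
        rcases hchain.total hs ht with h | h
        · exact hc ht p (h hps) q hqt hpq
        · exact hc hs p hps q (h hqt) hpq
      obtain ⟨m, hm⟩ := zorn_subset {T : Set X | IsSeparatedSet (dj j) (3*δ) T} hz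
      exact ⟨m, hm.1, fun U hU hTU => subset_antisymm (hm.2 hU hTU) hTU⟩
    have hTlow := hlower j (3*δ) (by linarith) (by linarith) T
      ⟨hTsep, fun U hTU hU => hTmax U hU hTU⟩
    -- inject T into S
    choose f hfS hfd using hnet
    have hinj : Set.InjOn f T := by
      intro t ht t' ht' hff
      by_contra hne
      have hsep := hTsep t ht t' ht' hne
      have h1 := abs_lt.mp (hjd t (f t))
      have h2 := abs_lt.mp (hjd t' (f t'))
      have h3 : dj j t t' ≤ dj j t (f t) + dj j (f t) t' := hjtri t (f t) t'
      have h4 : dj j (f t) t' = dj j t' (f t') := by rw [hjsymm, hff]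
      have h5 := hfd t
      have h6 := hfd t'
      linarith [h1.2, h2.2]
    have hTcard : (T.ncard : ℝ) ≤ (S.ncard : ℝ) := by
      exact_mod_cast Set.ncard_le_ncard_of_injOn f (fun t _ => hfS t) hinj hfin
    have h9 : b / (3*δ)^2 = (b/9) / δ^2 := by rw [div_div, mul_pow]; norm_num
    linarith [hTlow, h9 ▸ hTlow]
  · have : B / (δ/2)^2 = 4 * B / δ^2 := by
      field_simp
      ring
    linarith [hcard]
end

section
/- Let K₀ > 0 and T ∈ (0, ∞]. Let f : [0, T) → ℝ be twice differentiable with f(0) = 0, f'(0) = 1, and suppose f(r) ≥ 0 and f''(r) + K₀·f(r) ≥ 0 for all r ∈ [0, T). Then for every r ∈ [0, T) with r ≤ π/(2·√K₀), one has sin(√K₀·r)·f'(r) − √K₀·cos(√K₀·r)·f(r) ≥ 0. -/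
/-!
With `s = √K₀`, the Wronskian `W = sin (s r) f' - s cos (s r) f` of `f` against the comparison
solution `sin (s r)` of `y'' + K₀ y = 0` has derivative `sin (s r) (f'' + K₀ f)`. This is
nonnegative as long as `s r ≤ π`, so `W` is nondecreasing from `W 0 = 0`.
-/

open Real Set

theorem hasDerivWithinAt_sin_mul_deriv_sub_cos_mul {f f' : ℝ → ℝ} {f'' s x : ℝ} {D : Set ℝ}
    (hf : HasDerivWithinAt f (f' x) D x) (hf' : HasDerivWithinAt f' f'' D x) :
    HasDerivWithinAt (fun y ↦ sin (s * y) * f' y - s * cos (s * y) * f y)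
      (sin (s * x) * (f'' + s ^ 2 * f x)) D x := by
  have hsin : HasDerivWithinAt (fun y ↦ sin (s * y)) (cos (s * x) * s) D x := by
    simpa using ((hasDerivAt_id' x).const_mul s).sin.hasDerivWithinAt
  have hcos : HasDerivWithinAt (fun y ↦ cos (s * y)) (-sin (s * x) * s) D x := by
    simpa using ((hasDerivAt_id' x).const_mul s).cos.hasDerivWithinAt
  exact ((hsin.mul hf').sub ((hcos.const_mul s).mul hf)).congr_deriv (by ring)

theorem sin_mul_deriv_sub_cos_mul_nonneg {f f' f'' : ℝ → ℝ} {s r : ℝ} (hs : 0 ≤ s) (hr : 0 ≤ r)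
    (hsr : s * r ≤ π) (hf0 : f 0 = 0)
    (hf : ∀ x ∈ Icc 0 r, HasDerivWithinAt f (f' x) (Icc 0 r) x)
    (hf' : ∀ x ∈ Icc 0 r, HasDerivWithinAt f' (f'' x) (Icc 0 r) x)
    (hineq : ∀ x ∈ Icc 0 r, 0 ≤ f'' x + s ^ 2 * f x) :
    0 ≤ sin (s * r) * f' r - s * cos (s * r) * f r := by
  have hW (x) (hx : x ∈ Icc 0 r) :=
    hasDerivWithinAt_sin_mul_deriv_sub_cos_mul (s := s) (hf x hx) (hf' x hx)
  have hmono := monotoneOn_of_hasDerivWithinAt_nonneg (convex_Icc 0 r)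
    (fun x hx ↦ (hW x hx).continuousWithinAt)
    (fun x hx ↦ (hW x (interior_subset hx)).mono interior_subset) fun x hx ↦ by
      rw [interior_Icc] at hx
      have hsx : s * x ≤ π := (mul_le_mul_of_nonneg_left hx.2.le hs).trans hsr
      exact mul_nonneg (sin_nonneg_of_nonneg_of_le_pi (mul_nonneg hs hx.1.le) hsx)
        (hineq x (Ioo_subset_Icc_self hx))
  simpa [hf0] using hmono (left_mem_Icc.2 hr) (right_mem_Icc.2 hr) hr

theorem jacobi_field_differential_inequality_general
    (K₀ : ℝ) (hK₀ : 0 < K₀) (T : EReal)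
    (f f' f'' : ℝ → ℝ)
    (D : Set ℝ) (hD : D = {r : ℝ | 0 ≤ r ∧ (r : EReal) < T})
    (hf0 : f 0 = 0)
    (hderiv1 : ∀ r ∈ D, HasDerivWithinAt f (f' r) D r)
    (hderiv2 : ∀ r ∈ D, HasDerivWithinAt f' (f'' r) D r)
    (hineq : ∀ r ∈ D, 0 ≤ f'' r + K₀ * f r) :
    ∀ r ∈ D, r ≤ Real.pi / (2 * Real.sqrt K₀) →
      0 ≤ Real.sin (Real.sqrt K₀ * r) * f' r
        - Real.sqrt K₀ * Real.cos (Real.sqrt K₀ * r) * f r := by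
  intro r hr hrle
  subst hD
  have hsub : Icc 0 r ⊆ {r : ℝ | 0 ≤ r ∧ (r : EReal) < T} := fun x hx ↦
    ⟨hx.1, lt_of_le_of_lt (by exact_mod_cast hx.2) hr.2⟩
  have hs : 0 < √K₀ := sqrt_pos.2 hK₀
  have hsr : √K₀ * r ≤ π := by
    calc √K₀ * r ≤ √K₀ * (π / (2 * √K₀)) := mul_le_mul_of_nonneg_left hrle hs.le
      _ = π / 2 := by field_simp
      _ ≤ π := by linarith [pi_pos]
  refine sin_mul_deriv_sub_cos_mul_nonneg hs.le hr.1 hsr hf0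
    (fun x hx ↦ (hderiv1 x (hsub hx)).mono hsub) (fun x hx ↦ (hderiv2 x (hsub hx)).mono hsub)
    fun x hx ↦ ?_
  rw [sq_sqrt hK₀.le]
  exact hineq x (hsub hx)

theorem jacobi_field_differential_inequality
    (K₀ : ℝ) (hK₀ : 0 < K₀) (T : EReal) (hT : 0 < T)
    (f f' f'' : ℝ → ℝ)
    (D : Set ℝ) (hD : D = {r : ℝ | 0 ≤ r ∧ (r : EReal) < T})
    (hf0 : f 0 = 0) (hf'0 : f' 0 = 1)
    (hderiv1 : ∀ r ∈ D, HasDerivWithinAt f (f' r) D r)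
    (hderiv2 : ∀ r ∈ D, HasDerivWithinAt f' (f'' r) D r)
    (hfnonneg : ∀ r ∈ D, 0 ≤ f r)
    (hineq : ∀ r ∈ D, 0 ≤ f'' r + K₀ * f r) :
    ∀ r ∈ D, r ≤ Real.pi / (2 * Real.sqrt K₀) →
      0 ≤ Real.sin (Real.sqrt K₀ * r) * f' r
        - Real.sqrt K₀ * Real.cos (Real.sqrt K₀ * r) * f r :=
  jacobi_field_differential_inequality_general K₀ hK₀ T f f' f'' D hD hf0 hderiv1 hderiv2 hineq
end

section
/- Let X be a set and let d and d' be pseudometrics on X. Let δ > 0 and suppose |d(x,y) − d'(x,y)| < δ/2 for all x, y ∈ X. Let S ⊆ X be δ-separated for d and such that for every x ∈ X there exists p ∈ S with d(x,p) ≤ δ, and let T ⊆ X be 3δ-separated for d'. Then there exists an injective map from T into S; in particular the cardinality of T is at most that of S. -/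
theorem injection_of_separated_sets {X : Type*} (d d' : X → X → ℝ)
    (hd : IsPseudometric d) (hd' : IsPseudometric d')
    (δ : ℝ) (hδ : 0 < δ)
    (hclose : ∀ x y : X, |d x y - d' x y| < δ / 2)
    (S T : Set X)
    (hS : IsSeparatedSet d δ S)
    (hSnet : ∀ x : X, ∃ p ∈ S, d x p ≤ δ)
    (hT : IsSeparatedSet d' (3 * δ) T) :
    ∃ f : T → S, Function.Injective f := by
  obtain ⟨-, dsymm, -, dtri⟩ := hd
  choose p hpS hpd using fun q : T => hSnet (q : X)
  refine ⟨fun q => ⟨p q, hpS q⟩, fun q₁ q₂ h => ?_⟩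
  simp only [Subtype.mk.injEq] at h
  by_contra hne
  have hsep := hT q₁ q₁.2 q₂ q₂.2 (fun e => hne (Subtype.ext e))
  have h1 : d' (q₁ : X) (p q₁) < δ + δ / 2 := by
    have := hclose (q₁ : X) (p q₁)
    have := abs_lt.mp this
    linarith [hpd q₁]
  have h2 : d' (p q₂) (q₂ : X) < δ + δ / 2 := by
    have hc := abs_lt.mp (hclose (p q₂) (q₂ : X))
    have : d (p q₂) (q₂ : X) ≤ δ := (dsymm (p q₂) (q₂ : X)) ▸ hpd q₂
    linarith
  have htri := hd'.2.2.2 (q₁ : X) (p q₁) (q₂ : X)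
  rw [h] at h1 htri
  linarith
end
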